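/- Let α > 0, 0 < c < 1, and let w ≥ 0 be a real number with c·(e^{(1−c)w} − 1) < 1 − c. Define P_n(c) = Σ_{k=0}^n S(n,k)·(α)_k·c^k·(1−c)^{n−k}. Then Σ_{n=0}^∞ P_n(c)·w^n/n! = ((1 − c·e^{(1−c)w})/(1−c))^{−α}, where the power is the real power. -/

import Mathlib

/-- The Pochhammer symbol (rising factorial) `(a)_k = a (a+1) ⋯ (a+k-1)`. -/
def poch (a : ℝ) (k : ℕ) : ℝ := ∏ i ∈ Finset.range k, (a + i)

/-- The Stirling numbers of the second kind,
`S(n,k) = (1/k!) Σ_{j=0}^k C(k,j) (-1)^{k-j} j^n`. -/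
noncomputable def stirling2 (n k : ℕ) : ℝ :=
  (1 / k.factorial) *
    ∑ j ∈ Finset.range (k + 1), (k.choose j : ℝ) * (-1 : ℝ) ^ (k - j) * (j : ℝ) ^ n

/-!
Substituting `q = c / (1 - c)` and `y = (1 - c) w` turns `P_n(c) wⁿ / n!` into
`(∑ₖ S(n,k) (α)ₖ qᵏ) yⁿ / n!`. Summed over `n` first, the double series gives
`∑ₙ S(n,k) yⁿ / n! = (eʸ - 1)ᵏ / k!`, and then the binomial series
`∑ₖ (α)ₖ uᵏ / k! = (1 - u)^(-α)` at `u = q (eʸ - 1) < 1`. The explicit formula is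
`S(n,k) = Δᵏ(xⁿ)(0) / k!`, which satisfies the recurrence of the combinatorial Stirling numbers;
so `S(n,k) ≥ 0` and, as `q, y ≥ 0`, the double series converges absolutely and may equally be
summed over `k` first, which gives `∑ₙ P_n(c) wⁿ / n!`.
-/

open Finset Nat fwdDiff

section Stirling

variable {R : Type*} [CommRing R]

theorem fwdDiff_iter_succ_pow_succ_apply_zero (k n : ℕ) :
    Δ_[1] ^[k + 1] (fun r : R ↦ r ^ (n + 1)) 0 = (k + 1) * Δ_[1] ^[k] (fun r : R ↦ r ^ n) 1 := by
  rw [fwdDiff_iter_eq_sum_shift, fwdDiff_iter_eq_sum_shift, sum_range_succ' _ (k + 1), mul_sum]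
  simp only [zsmul_eq_mul, nsmul_eq_mul, mul_one, zero_add, Nat.cast_zero, ne_eq,
    Nat.add_one_ne_zero, not_false_eq_true, zero_pow, mul_zero, add_zero]
  refine sum_congr rfl fun i _ ↦ ?_
  have hchoose : ((k + 1 : ℕ) : R) * k.choose i = (k + 1).choose (i + 1) * (i + 1) := by
    exact_mod_cast congrArg (Nat.cast (R := R)) (add_one_mul_choose_eq k i)
  rw [Nat.add_sub_add_right]
  push_cast at hchoose ⊢
  linear_combination (-(-1 : R) ^ (k - i) * (1 + i) ^ n) * hchoose

theorem fwdDiff_iter_pow_apply_zero (n k : ℕ) :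
    Δ_[1] ^[k] (fun r : R ↦ r ^ n) 0 = ((k ! * stirlingSecond n k : ℕ) : R) := by
  induction n generalizing k with
  | zero =>
    cases k with
    | zero => simp
    | succ k => simpa using congrFun (fwdDiff_iter_pow_eq_zero_of_lt (R := R) (Nat.succ_pos k)) 0
  | succ n ih =>
    cases k with
    | zero => simp
    | succ k =>
      have hshift : Δ_[1] ^[k] (fun r : R ↦ r ^ n) 1
          = Δ_[1] ^[k] (fun r : R ↦ r ^ n) 0 + Δ_[1] ^[k + 1] (fun r : R ↦ r ^ n) 0 := by
        rw [Function.iterate_succ_apply', fwdDiff, zero_add, add_sub_cancel]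
      rw [fwdDiff_iter_succ_pow_succ_apply_zero, hshift, ih, ih, stirlingSecond_succ_succ,
        factorial_succ]
      push_cast
      ring

end Stirling

theorem stirling2_eq_stirlingSecond (n k : ℕ) : stirling2 n k = stirlingSecond n k := by
  have h := fwdDiff_iter_pow_apply_zero (R := ℝ) n k
  simp only [fwdDiff_iter_eq_sum_shift, zsmul_eq_mul, nsmul_eq_mul, mul_one, zero_add] at h
  rw [stirling2, one_div, inv_mul_eq_iff_eq_mul₀ (by positivity)]
  push_cast at h ⊢
  rw [← h]
  exact sum_congr rfl fun j _ ↦ by ring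

theorem stirling2_nonneg (n k : ℕ) : 0 ≤ stirling2 n k := by
  rw [stirling2_eq_stirlingSecond]
  positivity

theorem stirling2_eq_zero_of_lt {n k : ℕ} (h : n < k) : stirling2 n k = 0 := by
  rw [stirling2_eq_stirlingSecond, stirlingSecond_eq_zero_of_lt h, Nat.cast_zero]

theorem hasSum_stirling2_mul_pow_div_factorial (k : ℕ) (y : ℝ) :
    HasSum (fun n ↦ stirling2 n k * y ^ n / n !) ((Real.exp y - 1) ^ k / k !) := by
  have hexp (j : ℕ) : HasSum (fun n ↦ ((j : ℝ) * y) ^ n / n !) (Real.exp y ^ j) := by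
    rw [← Real.exp_nat_mul, Real.exp_eq_exp_ℝ]
    exact NormedSpace.expSeries_div_hasSum_exp _
  have hsum := hasSum_sum fun j (_ : j ∈ range (k + 1)) ↦
    (hexp j).mul_left ((k.choose j : ℝ) * (-1) ^ (k - j) / k !)
  have hterm (n : ℕ) : ∑ j ∈ range (k + 1), (k.choose j : ℝ) * (-1) ^ (k - j) / k ! *
      ((j * y) ^ n / n !) = stirling2 n k * y ^ n / n ! := by
    simp only [stirling2, mul_sum, sum_mul, sum_div]
    exact sum_congr rfl fun j _ ↦ by ring
  have hvalue : ∑ j ∈ range (k + 1), (k.choose j : ℝ) * (-1) ^ (k - j) / k ! * Real.exp y ^ j =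
      (Real.exp y - 1) ^ k / k ! := by
    rw [sub_eq_add_neg, add_pow, sum_div]
    exact sum_congr rfl fun j _ ↦ by ring
  simpa only [hterm, hvalue] using hsum

theorem poch_eq_ascPochhammer_eval (a : ℝ) (k : ℕ) : poch a k = (ascPochhammer ℝ k).eval a := by
  induction k with
  | zero => simp [poch]
  | succ k ih => rw [poch, prod_range_succ, ← poch, ih, ascPochhammer_succ_eval]

theorem poch_div_factorial_eq_choose (a : ℝ) (k : ℕ) :
    poch a k / k ! = Ring.choose (a + k - 1) k := by
  rw [← Ring.multichoose_eq, div_eq_iff (by positivity), poch_eq_ascPochhammer_eval,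
    ← Polynomial.ascPochhammer_smeval_eq_eval, ← Ring.factorial_nsmul_multichoose_eq_ascPochhammer,
    nsmul_eq_mul, mul_comm]

theorem hasFPowerSeriesOnBall_one_sub_rpow_neg (a : ℝ) :
    HasFPowerSeriesOnBall (fun x ↦ (1 - x) ^ (-a))
      (FormalMultilinearSeries.ofScalars ℝ fun k ↦ poch a k / k !) 0 1 := by
  simp_rw [poch_div_factorial_eq_choose]
  refine (Real.one_div_one_sub_rpow_hasFPowerSeriesOnBall_zero a).congr fun x hx ↦ ?_
  have hx1 : x < 1 := by
    have : |x| < 1 := by simpa [Real.enorm_eq_ofReal_abs, ENNReal.ofReal_lt_one] using hx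
    exact (abs_lt.mp this).2
  simp only [one_div, Real.rpow_neg (by linarith : (0 : ℝ) ≤ 1 - x)]

theorem hasSum_poch_div_factorial_mul_pow (a : ℝ) {u : ℝ} (hu : |u| < 1) :
    HasSum (fun k ↦ poch a k / k ! * u ^ k) ((1 - u) ^ (-a)) := by
  have hu' : u ∈ Metric.eball (0 : ℝ) 1 := by
    simpa [Real.enorm_eq_ofReal_abs, ENNReal.ofReal_lt_one] using hu
  simpa [mul_comm] using (hasFPowerSeriesOnBall_one_sub_rpow_neg a).hasSum hu'

theorem summable_abs_poch_div_factorial_mul_pow (a : ℝ) {u : ℝ} (hu : |u| < 1) :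
    Summable fun k ↦ |poch a k / k ! * u ^ k| := by
  have hu' : u ∈ Metric.eball (0 : ℝ) 1 := by
    simpa [Real.enorm_eq_ofReal_abs, ENNReal.ofReal_lt_one] using hu
  have h := FormalMultilinearSeries.summable_norm_apply _
    (Metric.eball_subset_eball (hasFPowerSeriesOnBall_one_sub_rpow_neg a).r_le hu')
  simpa [mul_comm, abs_div] using h

theorem summable_mul_of_hasSum_nonneg {β γ : Type*} {c : β → ℝ} {b : β → γ → ℝ} {B : β → ℝ}
    (hb0 : ∀ k n, 0 ≤ b k n) (hb : ∀ k, HasSum (b k) (B k)) (hc : Summable fun k ↦ |c k| * B k) :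
    Summable fun p : β × γ ↦ c p.1 * b p.1 p.2 := by
  refine Summable.of_norm ?_
  have hnorm : (fun p : β × γ ↦ ‖c p.1 * b p.1 p.2‖) = fun p ↦ |c p.1| * b p.1 p.2 := by
    ext p
    rw [Real.norm_eq_abs, abs_mul, abs_of_nonneg (hb0 _ _)]
  have hnonneg : 0 ≤ fun p : β × γ ↦ |c p.1| * b p.1 p.2 :=
    fun p ↦ mul_nonneg (abs_nonneg _) (hb0 _ _)
  rw [hnorm, summable_prod_of_nonneg hnonneg]
  exact ⟨fun k ↦ ((hb k).mul_left |c k|).summable,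
    hc.congr fun k ↦ ((hb k).mul_left |c k|).tsum_eq.symm⟩

theorem hasSum_sum_stirling2_mul_poch_mul_pow (a : ℝ) {q y : ℝ} (hq : 0 ≤ q) (hy : 0 ≤ y)
    (hqy : q * (Real.exp y - 1) < 1) :
    HasSum (fun n ↦ (∑ k ∈ range (n + 1), stirling2 n k * poch a k * q ^ k) * y ^ n / n !)
      ((1 - q * (Real.exp y - 1)) ^ (-a)) := by
  set u := q * (Real.exp y - 1) with hu_def
  have hey : 0 ≤ Real.exp y - 1 := sub_nonneg.mpr (Real.one_le_exp hy)
  have hu : |u| < 1 := abs_lt.mpr ⟨by linarith [mul_nonneg hq hey], hqy⟩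
  have hf : Summable fun p : ℕ × ℕ ↦
      poch a p.1 * q ^ p.1 * (stirling2 p.2 p.1 * y ^ p.2 / p.2 !) := by
    refine summable_mul_of_hasSum_nonneg (c := fun k ↦ poch a k * q ^ k)
      (b := fun k n ↦ stirling2 n k * y ^ n / n !)
      (fun k n ↦ by have := stirling2_nonneg n k; positivity)
      (fun k ↦ hasSum_stirling2_mul_pow_div_factorial k y)
      ((summable_abs_poch_div_factorial_mul_pow a hu).congr fun k ↦ ?_)
    rw [abs_mul, abs_mul, abs_div, abs_pow, abs_pow, abs_of_nonneg hq, Nat.abs_cast,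
      abs_of_nonneg (mul_nonneg hq hey), mul_pow]
    ring
  have hcol (k : ℕ) : HasSum (fun n ↦ poch a k * q ^ k * (stirling2 n k * y ^ n / n !))
      (poch a k / k ! * u ^ k) := by
    have h := (hasSum_stirling2_mul_pow_div_factorial k y).mul_left (poch a k * q ^ k)
    rwa [show poch a k * q ^ k * ((Real.exp y - 1) ^ k / k !) = poch a k / k ! * u ^ k by
      rw [hu_def, mul_pow]; ring] at h
  have hrow (n : ℕ) : HasSum (fun k ↦ poch a k * q ^ k * (stirling2 n k * y ^ n / n !))
      ((∑ k ∈ range (n + 1), stirling2 n k * poch a k * q ^ k) * y ^ n / n !) := by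
    have h := hasSum_sum_of_ne_finset_zero (L := SummationFilter.unconditional ℕ)
      (f := fun k ↦ poch a k * q ^ k * (stirling2 n k * y ^ n / n !)) (s := range (n + 1))
      fun k hk ↦ by simp [stirling2_eq_zero_of_lt (by simpa using hk : n < k)]
    have hval : ∑ k ∈ range (n + 1), poch a k * q ^ k * (stirling2 n k * y ^ n / n !)
        = (∑ k ∈ range (n + 1), stirling2 n k * poch a k * q ^ k) * y ^ n / n ! := by
      rw [sum_mul, sum_div]
      exact sum_congr rfl fun k _ ↦ by ring
    rwa [hval] at h
  have hsum := (hf.hasSum.prod_fiberwise hcol).unique (hasSum_poch_div_factorial_mul_pow a hu)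
  rw [← hsum]
  exact ((Equiv.prodComm ℕ ℕ).hasSum_iff.mpr hf.hasSum).prod_fiberwise hrow

theorem meixner_polynomials_egf_general
    (α c w : ℝ) (hc : 0 < c) (hc1 : c < 1) (hw : 0 ≤ w)
    (hcw : c * (Real.exp ((1 - c) * w) - 1) < 1 - c)
    (P : ℕ → ℝ → ℝ)
    (hP : ∀ (n : ℕ) (t : ℝ), P n t =
      ∑ k ∈ Finset.range (n + 1), stirling2 n k * poch α k * t ^ k * (1 - t) ^ (n - k)) :
    HasSum (fun n : ℕ => P n c * w ^ n / n.factorial)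
      (((1 - c * Real.exp ((1 - c) * w)) / (1 - c)) ^ (-α)) := by
  have h1c : 0 < 1 - c := sub_pos.mpr hc1
  have hegf := hasSum_sum_stirling2_mul_poch_mul_pow α (div_nonneg hc.le h1c.le)
    (mul_nonneg h1c.le hw) (by rwa [div_mul_eq_mul_div, div_lt_one h1c])
  have hterm (n : ℕ) : P n c * w ^ n / n ! = (∑ k ∈ range (n + 1),
      stirling2 n k * poch α k * (c / (1 - c)) ^ k) * ((1 - c) * w) ^ n / n ! := by
    rw [hP, sum_mul, sum_mul, sum_div, sum_div]
    refine sum_congr rfl fun k hk ↦ ?_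
    rw [div_pow, mul_pow, pow_sub₀ _ h1c.ne' (mem_range_succ_iff.mp hk)]
    field_simp
  have hvalue : 1 - c / (1 - c) * (Real.exp ((1 - c) * w) - 1)
      = (1 - c * Real.exp ((1 - c) * w)) / (1 - c) := by
    field_simp
    ring
  simp only [hterm]
  rwa [hvalue] at hegf

/-- The exponential generating function of the Meixner polynomials
`P_n(c) = Σ_{k=0}^n S(n,k) (α)_k c^k (1-c)^{n-k}`:
`Σ_n P_n(c) w^n/n! = ((1 - c e^{(1-c)w})/(1-c))^{-α}`. -/
theorem meixner_polynomials_egf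
    (α c w : ℝ) (hα : 0 < α) (hc : 0 < c) (hc1 : c < 1) (hw : 0 ≤ w)
    (hcw : c * (Real.exp ((1 - c) * w) - 1) < 1 - c)
    (P : ℕ → ℝ → ℝ)
    (hP : ∀ (n : ℕ) (t : ℝ), P n t =
      ∑ k ∈ Finset.range (n + 1), stirling2 n k * poch α k * t ^ k * (1 - t) ^ (n - k)) :
    HasSum (fun n : ℕ => P n c * w ^ n / n.factorial)
      (((1 - c * Real.exp ((1 - c) * w)) / (1 - c)) ^ (-α)) :=
  meixner_polynomials_egf_general α c w hc hc1 hw hcw P hP
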